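/- Let X be a centered random vector in ℝⁿ taking values x₁, …, x_m with probabilities p₁, …, p_m > 0, and let Y be another centered random vector in ℝⁿ with finite first moment. Define g(U, V) = Σ_{i=1}^m p_i (U_i + ⟨V_i, x_i⟩) − E[log(Σ_{i=1}^m p_i e^{U_i + ⟨V_i, Y⟩})] on 𝒮 = {(U,V) ∈ ℝ^m × (ℝⁿ)^m : Σ p_i U_i = 0, Σ p_i V_i = 0}. If g(U, V) → −∞ as ‖(U,V)‖ → ∞ with (U,V) ∈ 𝒮, then X ≼_cx Y. -/

import Mathlib

open MeasureTheory Real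
open scoped RealInnerProductSpace ENNReal

/-- Convex order for (finite-first-moment) measures on `ℝⁿ`: for every convex
`f : ℝⁿ → ℝ` whose expectation under `ν` is finite, the expectation under `μ` is finite
and `∫ f dμ ≤ ∫ f dν`. -/
def ConvexOrder {n : ℕ} (μ ν : Measure (EuclideanSpace ℝ (Fin n))) : Prop :=
  ∀ f : EuclideanSpace ℝ (Fin n) → ℝ, ConvexOn ℝ Set.univ f → Integrable f ν →
    Integrable f μ ∧ ∫ x, f x ∂μ ≤ ∫ x, f x ∂ν

/-- The function `g(U, V) = Σᵢ pᵢ (Uᵢ + ⟨Vᵢ, xᵢ⟩) - E[log Σᵢ pᵢ e^{Uᵢ + ⟨Vᵢ, Y⟩}]`. -/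
noncomputable def gfun {n m : ℕ} (p : Fin m → ℝ) (x : Fin m → EuclideanSpace ℝ (Fin n))
    (ν : Measure (EuclideanSpace ℝ (Fin n)))
    (UV : (Fin m → ℝ) × (Fin m → EuclideanSpace ℝ (Fin n))) : ℝ :=
  ∑ i, p i * (UV.1 i + ⟪UV.2 i, x i⟫)
    - ∫ y, Real.log (∑ i, p i * Real.exp (UV.1 i + ⟪UV.2 i, y⟫)) ∂ν

/-- The gauge-fixing subspace `𝒮 = {(U, V) : Σ pᵢ Uᵢ = 0, Σ pᵢ Vᵢ = 0}`. -/
def gaugeSet (n m : ℕ) (p : Fin m → ℝ) :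
    Set ((Fin m → ℝ) × (Fin m → EuclideanSpace ℝ (Fin n))) :=
  {UV | ∑ i, p i * UV.1 i = 0 ∧ ∑ i, p i • UV.2 i = 0}

/-!
For convex `f`, take affine minorants `ℓᵢ = aᵢ + ⟪bᵢ, ·⟫ ≤ f` with `ℓᵢ(xᵢ) = f(xᵢ) - ε`.
Since `log Σᵢ pᵢ e^{t ℓᵢ(y)} ≤ t f(y)`, along the ray through `(a, b)` we get
`g(t • (a, b)) ≥ t (Σᵢ pᵢ f(xᵢ) - ε - E f(Y))`. Because `X` and `Y` are centered, `g` does not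
change when a constant is added to all `Uᵢ` and a fixed vector to all `Vᵢ`, so on this ray `g`
agrees with its values on the projected ray in `𝒮`, where coercivity makes it nonpositive for some
`t > 0`. Hence `Σᵢ pᵢ f(xᵢ) - ε ≤ E f(Y)` for every `ε > 0`.
-/

open Finset

section LogSumExp

variable {ι : Type*} [Fintype ι] {p c : ι → ℝ}

lemma sum_mul_exp_pos (hp : ∀ i, 0 < p i) (hpsum : ∑ i, p i = 1) :
    0 < ∑ i, p i * exp (c i) :=
  sum_pos (fun i _ => mul_pos (hp i) (exp_pos _))
    (nonempty_of_sum_ne_zero (hpsum ▸ one_ne_zero))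

lemma log_sum_mul_exp_le (hp : ∀ i, 0 < p i) (hpsum : ∑ i, p i = 1) {C : ℝ}
    (hc : ∀ i, c i ≤ C) : log (∑ i, p i * exp (c i)) ≤ C := by
  rw [log_le_iff_le_exp (sum_mul_exp_pos hp hpsum)]
  calc ∑ i, p i * exp (c i) ≤ ∑ i, p i * exp C := by
        gcongr with i
        · exact (hp i).le
        · exact hc i
    _ = exp C := by rw [← sum_mul, hpsum, one_mul]

lemma log_add_le_log_sum_mul_exp (hp : ∀ i, 0 < p i) (j : ι) :
    log (p j) + c j ≤ log (∑ i, p i * exp (c i)) := by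
  rw [← log_exp (c j), ← log_mul (hp j).ne' (exp_pos _).ne']
  exact log_le_log (mul_pos (hp j) (exp_pos _))
    (single_le_sum (fun i _ => (mul_pos (hp i) (exp_pos _)).le) (mem_univ j))

lemma log_sum_mul_exp_sub (hp : ∀ i, 0 < p i) (hpsum : ∑ i, p i = 1) (s : ℝ) :
    log (∑ i, p i * exp (c i - s)) = log (∑ i, p i * exp (c i)) - s := by
  simp_rw [exp_sub, ← mul_div_assoc, ← sum_div]
  rw [log_div (sum_mul_exp_pos hp hpsum).ne' (exp_pos s).ne', log_exp]

end LogSumExp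

theorem ConvexOn.exists_add_inner_le_of_lt {E : Type*} [NormedAddCommGroup E]
    [InnerProductSpace ℝ E] [CompleteSpace E] {f : E → ℝ} (hf : ConvexOn ℝ Set.univ f)
    (hfc : LowerSemicontinuous f) {x₀ : E} {a : ℝ} (ha : a < f x₀) :
    ∃ (c : ℝ) (b : E), (∀ y, c + ⟪b, y⟫ ≤ f y) ∧ c + ⟪b, x₀⟫ = a := by
  obtain ⟨l, c, hle, heq⟩ := hf.exists_affine_le_of_lt (𝕜 := ℝ) (Set.mem_univ x₀) ha
    isClosed_univ (hfc.lowerSemicontinuousOn _)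
  refine ⟨c, (InnerProductSpace.toDual ℝ E).symm l, fun y => ?_, ?_⟩
  · simpa [InnerProductSpace.toDual_symm_apply, add_comm] using hle ⟨y, Set.mem_univ y⟩
  · simpa [InnerProductSpace.toDual_symm_apply, add_comm] using heq

section Dirac

variable {α ι E : Type*} [MeasurableSpace α] [MeasurableSingletonClass α] [Fintype ι]
  [NormedAddCommGroup E] (p : ι → ℝ) (x : ι → α) (f : α → E)

lemma integrable_sum_smul_dirac :
    Integrable f (∑ i, ENNReal.ofReal (p i) • Measure.dirac (x i)) :=
  integrable_finsetSum_measure.2 fun _ _ =>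
    (integrable_dirac enorm_lt_top).smul_measure ENNReal.ofReal_ne_top

lemma integral_sum_smul_dirac [NormedSpace ℝ E] [CompleteSpace E] (hp : ∀ i, 0 ≤ p i) :
    ∫ y, f y ∂(∑ i, ENNReal.ofReal (p i) • Measure.dirac (x i)) = ∑ i, p i • f (x i) := by
  rw [integral_finsetSum_measure fun i _ =>
    (integrable_dirac enorm_lt_top).smul_measure ENNReal.ofReal_ne_top]
  refine sum_congr rfl fun i _ => ?_
  rw [integral_smul_measure, integral_dirac, ENNReal.toReal_ofReal (hp i)]

end Dirac

lemma integrable_log_sum_mul_exp_affine {ι E : Type*} [Fintype ι] [NormedAddCommGroup E]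
    [InnerProductSpace ℝ E] [MeasurableSpace E] [OpensMeasurableSpace E] {ν : Measure E}
    [IsFiniteMeasure ν] {p : ι → ℝ} (hp : ∀ i, 0 < p i) (hpsum : ∑ i, p i = 1)
    (hmom : Integrable (fun y => y) ν) (U : ι → ℝ) (V : ι → E) :
    Integrable (fun y => log (∑ i, p i * exp (U i + ⟪V i, y⟫))) ν := by
  obtain ⟨j, -⟩ := nonempty_of_sum_ne_zero (hpsum ▸ one_ne_zero : ∑ i, p i ≠ 0)
  have haff : ∀ i, Integrable (fun y => U i + ⟪V i, y⟫) ν := fun i =>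
    (integrable_const _).add (hmom.const_inner _)
  have hcont : Continuous fun y => log (∑ i, p i * exp (U i + ⟪V i, y⟫)) :=
    (by fun_prop : Continuous fun y => ∑ i, p i * exp (U i + ⟪V i, y⟫)).log
      fun y => (sum_mul_exp_pos hp hpsum).ne'
  refine integrable_of_le_of_le hcont.aestronglyMeasurable
    (ae_of_all _ fun y => log_add_le_log_sum_mul_exp hp j)
    (ae_of_all _ fun y => log_sum_mul_exp_le hp hpsum fun i => (le_abs_self _).trans
      (single_le_sum (f := fun i => |U i + ⟪V i, y⟫|) (fun _ _ => abs_nonneg _) (mem_univ i)))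
    ((integrable_const _).add (haff j)) (integrable_finsetSum _ fun i _ => (haff i).abs)

section Gauge

variable {n m : ℕ} {p : Fin m → ℝ} {x : Fin m → EuclideanSpace ℝ (Fin n)}
  {ν : Measure (EuclideanSpace ℝ (Fin n))}

def gaugeProj (p : Fin m → ℝ) (UV : (Fin m → ℝ) × (Fin m → EuclideanSpace ℝ (Fin n))) :
    (Fin m → ℝ) × (Fin m → EuclideanSpace ℝ (Fin n)) :=
  (fun i => UV.1 i - ∑ j, p j * UV.1 j, fun i => UV.2 i - ∑ j, p j • UV.2 j)

lemma gaugeProj_mem_gaugeSet (hpsum : ∑ i, p i = 1)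
    (UV : (Fin m → ℝ) × (Fin m → EuclideanSpace ℝ (Fin n))) :
    gaugeProj p UV ∈ gaugeSet n m p := by
  constructor
  · simp only [gaugeProj, mul_sub, sum_sub_distrib, ← sum_mul, hpsum, one_mul, sub_self]
  · simp only [gaugeProj, smul_sub, sum_sub_distrib, ← sum_smul, hpsum, one_smul, sub_self]

lemma gaugeProj_smul (t : ℝ) (UV : (Fin m → ℝ) × (Fin m → EuclideanSpace ℝ (Fin n))) :
    gaugeProj p (t • UV) = t • gaugeProj p UV := by
  ext i
  · simp only [gaugeProj, Prod.smul_fst, Pi.smul_apply, smul_eq_mul, mul_sub, mul_sum,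
      mul_left_comm]
  · simp only [gaugeProj, Prod.smul_snd, Pi.smul_apply, smul_sub, smul_sum, smul_comm t]

lemma gfun_zero (hpsum : ∑ i, p i = 1) : gfun p x ν 0 = 0 := by
  simp [gfun, hpsum]

lemma gfun_gaugeProj (hp : ∀ i, 0 < p i) (hpsum : ∑ i, p i = 1)
    (hcent : ∑ i, p i • x i = 0) [IsProbabilityMeasure ν] (hmom : Integrable (fun y => y) ν)
    (hνcent : ∫ y, y ∂ν = 0) (UV : (Fin m → ℝ) × (Fin m → EuclideanSpace ℝ (Fin n))) :
    gfun p x ν (gaugeProj p UV) = gfun p x ν UV := by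
  obtain ⟨U, V⟩ := UV
  set Ubar := ∑ j, p j * U j
  set Vbar := ∑ j, p j • V j
  have hlog : ∀ y, log (∑ i, p i * exp (U i - Ubar + ⟪V i - Vbar, y⟫))
      = log (∑ i, p i * exp (U i + ⟪V i, y⟫)) - (Ubar + ⟪Vbar, y⟫) := fun y => by
    rw [← log_sum_mul_exp_sub hp hpsum]
    simp_rw [inner_sub_left, sub_add_sub_comm]
  have hVbar : ∑ i, p i * ⟪Vbar, x i⟫ = 0 := by
    simp_rw [← real_inner_smul_right, ← inner_sum, hcent, inner_zero_right]
  have hmean : ∑ i, p i * (U i - Ubar + ⟪V i - Vbar, x i⟫)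
      = ∑ i, p i * (U i + ⟪V i, x i⟫) - Ubar := by
    simp only [inner_sub_left, mul_add, mul_sub, sum_add_distrib, sum_sub_distrib, ← sum_mul,
      hpsum, hVbar]
    ring
  have hlin : Integrable (fun y => Ubar + ⟪Vbar, y⟫) ν :=
    (integrable_const _).add (hmom.const_inner _)
  have hshift : ∫ y, Ubar + ⟪Vbar, y⟫ ∂ν = Ubar := by
    rw [integral_add (integrable_const _) (hmom.const_inner _), integral_const,
      integral_inner hmom, hνcent, inner_zero_right, probReal_univ, one_smul, add_zero]
  simp only [gfun, gaugeProj]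
  rw [hmean, integral_congr_ae (ae_of_all _ hlog),
    integral_sub (integrable_log_sum_mul_exp_affine hp hpsum hmom _ _) hlin, hshift]
  ring

lemma exists_pos_gfun_smul_nonpos (hp : ∀ i, 0 < p i) (hpsum : ∑ i, p i = 1)
    (hcent : ∑ i, p i • x i = 0) [IsProbabilityMeasure ν] (hmom : Integrable (fun y => y) ν)
    (hνcent : ∫ y, y ∂ν = 0)
    (hlim : ∀ M : ℝ, ∃ R : ℝ, ∀ UV ∈ gaugeSet n m p, R ≤ ‖UV‖ → gfun p x ν UV ≤ M)
    (UV : (Fin m → ℝ) × (Fin m → EuclideanSpace ℝ (Fin n))) :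
    ∃ t : ℝ, 0 < t ∧ gfun p x ν (t • UV) ≤ 0 := by
  have hgauge : ∀ t : ℝ, gfun p x ν (t • UV) = gfun p x ν (t • gaugeProj p UV) := fun t => by
    rw [← gaugeProj_smul, gfun_gaugeProj hp hpsum hcent hmom hνcent]
  by_cases hw : gaugeProj p UV = 0
  · exact ⟨1, one_pos, by rw [hgauge, hw, smul_zero, gfun_zero hpsum]⟩
  obtain ⟨R, hR⟩ := hlim 0
  have hw' : 0 < ‖gaugeProj p UV‖ := norm_pos_iff.2 hw
  refine ⟨max (R / ‖gaugeProj p UV‖) 1, by positivity, ?_⟩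
  rw [hgauge]
  refine hR _ (gaugeProj_smul (p := p) _ UV ▸ gaugeProj_mem_gaugeSet hpsum _) ?_
  rw [norm_smul, norm_of_nonneg (by positivity)]
  exact (div_le_iff₀ hw').1 (le_max_left _ _)

lemma le_gfun_smul_of_add_inner_le (hp : ∀ i, 0 < p i) (hpsum : ∑ i, p i = 1)
    [IsFiniteMeasure ν] (hmom : Integrable (fun y => y) ν) {f : EuclideanSpace ℝ (Fin n) → ℝ}
    (hf : Integrable f ν) {a : Fin m → ℝ} {b : Fin m → EuclideanSpace ℝ (Fin n)}
    (hab : ∀ i y, a i + ⟪b i, y⟫ ≤ f y) {t : ℝ} (ht : 0 ≤ t) :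
    t * (∑ i, p i * (a i + ⟪b i, x i⟫) - ∫ y, f y ∂ν) ≤ gfun p x ν (t • (a, b)) := by
  have hlog : ∀ y, log (∑ i, p i * exp (t * a i + ⟪t • b i, y⟫)) ≤ t * f y := fun y =>
    log_sum_mul_exp_le hp hpsum fun i => by
      rw [real_inner_smul_left, ← mul_add]
      exact mul_le_mul_of_nonneg_left (hab i y) ht
  have hint := integral_mono (integrable_log_sum_mul_exp_affine hp hpsum hmom _ _)
    (hf.const_mul t) hlog
  rw [integral_const_mul] at hint
  have hmean : ∑ i, p i * (t * a i + ⟪t • b i, x i⟫) = t * ∑ i, p i * (a i + ⟪b i, x i⟫) := by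
    simp only [real_inner_smul_left, ← mul_add, mul_sum, mul_left_comm]
  simp only [gfun, Prod.smul_fst, Prod.smul_snd, Pi.smul_apply, smul_eq_mul, hmean]
  linarith

end Gauge

theorem statement_14_general (n m : ℕ)
    (p : Fin m → ℝ) (x : Fin m → EuclideanSpace ℝ (Fin n))
    (hp : ∀ i, 0 < p i) (hpsum : ∑ i, p i = 1) (hcent : ∑ i, p i • x i = 0)
    (ν : Measure (EuclideanSpace ℝ (Fin n))) (hν : IsProbabilityMeasure ν)
    (hmom : Integrable (fun y => y) ν) (hνcent : ∫ y, y ∂ν = 0)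
    (hlim : ∀ M : ℝ, ∃ R : ℝ, ∀ UV ∈ gaugeSet n m p, R ≤ ‖UV‖ → gfun p x ν UV ≤ M) :
    ConvexOrder (∑ i, ENNReal.ofReal (p i) • Measure.dirac (x i)) ν := by
  intro f hf hfν
  refine ⟨integrable_sum_smul_dirac p x f, ?_⟩
  rw [integral_sum_smul_dirac p x f fun i => (hp i).le]
  refine le_of_forall_sub_le fun ε hε => ?_
  choose a b hab hax using fun i => hf.exists_add_inner_le_of_lt
    hf.locallyLipschitz.continuous.lowerSemicontinuous (sub_lt_self (f (x i)) hε)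
  obtain ⟨t, ht, hgt⟩ := exists_pos_gfun_smul_nonpos hp hpsum hcent hmom hνcent hlim (a, b)
  have hlow := (le_gfun_smul_of_add_inner_le (x := x) hp hpsum hmom hfν hab ht.le).trans hgt
  have hS : ∑ i, p i * (a i + ⟪b i, x i⟫) = ∑ i, p i • f (x i) - ε := by
    simp only [hax, mul_sub, sum_sub_distrib, ← sum_mul, hpsum, one_mul, smul_eq_mul]
  rw [hS] at hlow
  exact sub_nonpos.1 (nonpos_of_mul_nonpos_right hlow ht)

/-- Let `X` be centered taking values `xᵢ` with probabilities `pᵢ > 0` and let `Y ∼ ν` be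
centered with finite first moment.  If `g(U,V) → -∞` as `‖(U,V)‖ → ∞` within `𝒮`, then
`X ≼_cx Y`. -/
theorem statement_14 (n m : ℕ) (hm : 1 ≤ m)
    (p : Fin m → ℝ) (x : Fin m → EuclideanSpace ℝ (Fin n))
    (hp : ∀ i, 0 < p i) (hpsum : ∑ i, p i = 1) (hcent : ∑ i, p i • x i = 0)
    (ν : Measure (EuclideanSpace ℝ (Fin n))) (hν : IsProbabilityMeasure ν)
    (hmom : Integrable (fun y => y) ν) (hνcent : ∫ y, y ∂ν = 0)
    (hlim : ∀ M : ℝ, ∃ R : ℝ, ∀ UV ∈ gaugeSet n m p, R ≤ ‖UV‖ → gfun p x ν UV ≤ M) :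
    ConvexOrder (∑ i, ENNReal.ofReal (p i) • Measure.dirac (x i)) ν :=
  statement_14_general n m p x hp hpsum hcent ν hν hmom hνcent hlim
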